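/- For every integer n ≥ 4, the edge-locating chromatic number of the fan F_n = K_1 + P_n equals n; moreover χ'_L(F_2) = 3 and χ'_L(F_3) = 4. -/

import Mathlib

open SimpleGraph

/-- Distance from a vertex to an edge: the minimum of the distances to the two endpoints. -/
noncomputable def edgeDist {V : Type*} (G : SimpleGraph V) (v : V) (e : Sym2 V) : ℕ :=
  Sym2.lift ⟨fun x y => min (G.dist v x) (G.dist v y), fun _ _ => min_comm _ _⟩ e

/-- Distance (in `ℕ∞`) from a vertex to the `i`-th color class of an edge coloring `c`
(it is `⊤` if the class is empty). -/
noncomputable def classDist {V : Type*} (G : SimpleGraph V) {k : ℕ} (c : Sym2 V → Fin k)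
    (v : V) (i : Fin k) : ℕ∞ :=
  ⨅ e ∈ {e | e ∈ G.edgeSet ∧ c e = i}, (edgeDist G v e : ℕ∞)

/-- `c` is an edge-locating `k`-coloring of `G`: it is a proper edge coloring (distinct edges
sharing an endpoint get different colors), and distinct vertices have distinct edge color codes
`(d(v, C_1), …, d(v, C_k))`. -/
def IsEdgeLocatingColoring {V : Type*} (G : SimpleGraph V) {k : ℕ} (c : Sym2 V → Fin k) : Prop :=
  (∀ e ∈ G.edgeSet, ∀ f ∈ G.edgeSet, e ≠ f → (∃ x, x ∈ e ∧ x ∈ f) → c e ≠ c f) ∧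
  (∀ u v : V, u ≠ v → ∃ i, classDist G c u i ≠ classDist G c v i)

/-- The edge-locating chromatic number `χ'_L(G)`: the least `k` such that `G` admits an
edge-locating `k`-coloring. -/
noncomputable def edgeLocatingChromaticNumber {V : Type*} (G : SimpleGraph V) : ℕ :=
  sInf {k | ∃ c : Sym2 V → Fin k, IsEdgeLocatingColoring G c}

/-- The join `G + H` of two graphs: all edges of `G`, all edges of `H`, and all edges between
a vertex of `G` and a vertex of `H`. -/
def graphJoin {α β : Type*} (G : SimpleGraph α) (H : SimpleGraph β) : SimpleGraph (α ⊕ β) :=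
  SimpleGraph.fromRel (fun x y =>
    (∃ a b, x = Sum.inl a ∧ y = Sum.inl b ∧ G.Adj a b) ∨
    (∃ a b, x = Sum.inr a ∧ y = Sum.inr b ∧ H.Adj a b) ∨
    (∃ a b, x = Sum.inl a ∧ y = Sum.inr b))

/-- A set `M` of edges of `G` forming a matching: pairwise vertex-disjoint edges of `G`. -/
def IsMatchingSet {V : Type*} (G : SimpleGraph V) (M : Set (Sym2 V)) : Prop :=
  M ⊆ G.edgeSet ∧ ∀ e ∈ M, ∀ f ∈ M, e ≠ f → ∀ x, x ∈ e → x ∉ f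

open Sum

abbrev Fan (n : ℕ) : SimpleGraph (Fin 1 ⊕ Fin n) :=
  graphJoin (⊤ : SimpleGraph (Fin 1)) (SimpleGraph.pathGraph n)

lemma fan_adj_hub {n : ℕ} (a : Fin 1) (j : Fin n) : (Fan n).Adj (inl a) (inr j) := by
  rw [Fan, graphJoin, fromRel_adj]
  exact ⟨by simp, Or.inl (Or.inr (Or.inr ⟨a, j, rfl, rfl⟩))⟩

lemma fan_adj_iff {n : ℕ} (x y : Fin 1 ⊕ Fin n) : (Fan n).Adj x y ↔
    (∃ j, x = inl 0 ∧ y = inr j) ∨ (∃ j, x = inr j ∧ y = inl 0) ∨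
    (∃ i j : Fin n, x = inr i ∧ y = inr j ∧ (i.val + 1 = j.val ∨ j.val + 1 = i.val)) := by
  constructor
  · intro h
    rw [Fan, graphJoin, fromRel_adj] at h
    obtain ⟨hne, h|h⟩ := h <;>
    · rcases h with ⟨a,b,h1,h2,hab⟩|⟨a,b,h1,h2,hab⟩|⟨a,b,h1,h2⟩ <;> subst h1 <;> subst h2 <;>
        simp_all [SimpleGraph.pathGraph_adj, Fin.fin_one_eq_zero] <;> omega
  · rintro (⟨j, rfl, rfl⟩|⟨j, rfl, rfl⟩|⟨i, j, rfl, rfl, hij⟩)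
    · exact fan_adj_hub 0 j
    · exact (fan_adj_hub 0 j).symm
    · rw [Fan, graphJoin, fromRel_adj]
      refine ⟨by simp [Fin.ext_iff]; omega, Or.inl (Or.inr (Or.inl ⟨i, j, rfl, rfl, ?_⟩))⟩
      rw [SimpleGraph.pathGraph_adj]; tauto

lemma mem_fan_edgeSet {n : ℕ} (e : Sym2 (Fin 1 ⊕ Fin n)) : e ∈ (Fan n).edgeSet ↔
    (∃ j : Fin n, e = s(inl 0, inr j)) ∨
    (∃ i j : Fin n, i.val + 1 = j.val ∧ e = s(inr i, inr j)) := by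
  induction e using Sym2.ind with
  | _ x y =>
    rw [mem_edgeSet, fan_adj_iff]
    constructor
    · rintro (⟨j, rfl, rfl⟩|⟨j, rfl, rfl⟩|⟨i, j, rfl, rfl, hij|hij⟩)
      · exact Or.inl ⟨j, rfl⟩
      · exact Or.inl ⟨j, Sym2.eq_swap⟩
      · exact Or.inr ⟨i, j, hij, rfl⟩
      · exact Or.inr ⟨j, i, hij, Sym2.eq_swap⟩
    · rintro (⟨j, he⟩|⟨i, j, hij, he⟩) <;> rw [Sym2.eq_iff] at he
      · rcases he with ⟨rfl, rfl⟩|⟨rfl, rfl⟩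
        · exact Or.inl ⟨j, rfl, rfl⟩
        · exact Or.inr (Or.inl ⟨j, rfl, rfl⟩)
      · rcases he with ⟨rfl, rfl⟩|⟨rfl, rfl⟩
        · exact Or.inr (Or.inr ⟨i, j, rfl, rfl, Or.inl hij⟩)
        · exact Or.inr (Or.inr ⟨j, i, rfl, rfl, Or.inr hij⟩)

lemma fan_reachable {n : ℕ} (u v : Fin 1 ⊕ Fin n) : (Fan n).Reachable u v := by
  have key : ∀ x : Fin 1 ⊕ Fin n, x = inl 0 ∨ (Fan n).Adj (inl 0) x := by
    rintro (a|j)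
    · exact Or.inl (by simp [Fin.fin_one_eq_zero])
    · exact Or.inr (fan_adj_hub 0 j)
  rcases key u with rfl|hu <;> rcases key v with rfl|hv
  · rfl
  · exact hv.reachable
  · exact hu.reachable.symm
  · exact hu.reachable.symm.trans hv.reachable

lemma edgeDist_mk {V : Type*} (G : SimpleGraph V) (v x y : V) :
    edgeDist G v s(x, y) = min (G.dist v x) (G.dist v y) := rfl

lemma edgeDist_eq_zero_of_mem {V : Type*} (G : SimpleGraph V) {v : V} {e : Sym2 V}
    (h : v ∈ e) : edgeDist G v e = 0 := by
  induction e using Sym2.ind with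
  | _ x y =>
    rw [Sym2.mem_iff] at h
    rcases h with rfl|rfl <;> simp [edgeDist_mk, SimpleGraph.dist_self]

lemma one_le_edgeDist {V : Type*} {G : SimpleGraph V} (hr : ∀ u v : V, G.Reachable u v)
    {v : V} {e : Sym2 V} (h : v ∉ e) : 1 ≤ edgeDist G v e := by
  induction e using Sym2.ind with
  | _ x y =>
    rw [Sym2.mem_iff] at h
    push_neg at h
    rw [edgeDist_mk]
    exact le_min ((hr v x).pos_dist_of_ne h.1) ((hr v y).pos_dist_of_ne h.2)

lemma classDist_eq_zero {V : Type*} {G : SimpleGraph V} {k : ℕ} {c : Sym2 V → Fin k}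
    {v : V} {i : Fin k} {e : Sym2 V} (he : e ∈ G.edgeSet) (hc : c e = i) (hv : v ∈ e) :
    classDist G c v i = 0 := by
  refine le_antisymm ?_ zero_le
  refine le_trans (iInf₂_le e ⟨he, hc⟩) ?_
  simp [edgeDist_eq_zero_of_mem G hv]

lemma one_le_classDist {V : Type*} {G : SimpleGraph V} (hr : ∀ u v : V, G.Reachable u v)
    {k : ℕ} {c : Sym2 V → Fin k} {v : V} {i : Fin k}
    (h : ∀ e ∈ G.edgeSet, c e = i → v ∉ e) : 1 ≤ classDist G c v i := by
  refine le_iInf₂ fun e he => ?_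
  obtain ⟨he1, he2⟩ := he
  exact_mod_cast Nat.one_le_cast.mpr (one_le_edgeDist hr (h e he1 he2))

lemma classDist_ne {V : Type*} {G : SimpleGraph V} (hr : ∀ u v : V, G.Reachable u v)
    {k : ℕ} {c : Sym2 V → Fin k} {u v : V} {i : Fin k} {e : Sym2 V}
    (he : e ∈ G.edgeSet) (hc : c e = i) (hu : u ∈ e)
    (hv : ∀ f ∈ G.edgeSet, c f = i → v ∉ f) :
    classDist G c u i ≠ classDist G c v i := by
  rw [classDist_eq_zero he hc hu]
  intro h
  have := one_le_classDist hr hv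
  rw [← h] at this
  exact absurd this (by simp)

lemma mod_lin {a n : ℕ} (hn : 0 < n) (h : a < 2 * n) :
    (a % n = a ∧ a < n) ∨ (a % n = a - n ∧ n ≤ a) := by
  rcases Nat.lt_or_ge a n with h1|h1
  · exact Or.inl ⟨Nat.mod_eq_of_lt h1, h1⟩
  · refine Or.inr ⟨?_, h1⟩
    rw [Nat.mod_eq_sub_mod h1, Nat.mod_eq_of_lt (by omega)]

def fanColFun (n : ℕ) [NeZero n] : (Fin 1 ⊕ Fin n) → (Fin 1 ⊕ Fin n) → Fin n
  | inl _, inl _ => 0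
  | inl _, inr j => j
  | inr j, inl _ => j
  | inr i, inr j => ⟨(min i.val j.val + 2) % n, Nat.mod_lt _ (NeZero.pos n)⟩

def fanCol (n : ℕ) [NeZero n] : Sym2 (Fin 1 ⊕ Fin n) → Fin n :=
  Sym2.lift ⟨fanColFun n, by rintro (a|i) (b|j) <;> simp [fanColFun, Nat.min_comm]⟩

lemma fanCol_hub {n : ℕ} [NeZero n] (j : Fin n) : fanCol n s(inl 0, inr j) = j := rfl

lemma fanCol_path {n : ℕ} [NeZero n] (i j : Fin n) (hij : i.val + 1 = j.val) :
    (fanCol n s(inr i, inr j)).val = (i.val + 2) % n := by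
  have : min i.val j.val = i.val := by omega
  simp [fanCol, fanColFun, this]

/-- Generic "not incident to color class t" criterion for the fan coloring. -/
lemma fan_NI {n : ℕ} [NeZero n] (v : Fin 1 ⊕ Fin n) (t : Fin n)
    (h1 : v ≠ inl 0) (h2 : v ≠ inr t)
    (h3 : ∀ a b : Fin n, a.val + 1 = b.val → (a.val + 2) % n = t.val →
      v ≠ inr a ∧ v ≠ inr b) :
    ∀ e ∈ (Fan n).edgeSet, fanCol n e = t → v ∉ e := by
  intro e he hc
  rw [mem_fan_edgeSet] at he
  rcases he with ⟨j, rfl⟩|⟨a, b, hab, rfl⟩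
  · rw [fanCol_hub] at hc
    subst hc
    rw [Sym2.mem_iff]
    push_neg
    exact ⟨h1, h2⟩
  · have hcv : (a.val + 2) % n = t.val := by
      rw [← fanCol_path a b hab, hc]
    obtain ⟨hv1, hv2⟩ := h3 a b hab hcv
    rw [Sym2.mem_iff]
    push_neg
    exact ⟨hv1, hv2⟩

lemma fan_hub_edge_mem {n : ℕ} (j : Fin n) : s(inl 0, inr j) ∈ (Fan n).edgeSet :=
  (mem_fan_edgeSet _).mpr (Or.inl ⟨j, rfl⟩)

lemma fan_path_edge_mem {n : ℕ} (i j : Fin n) (hij : i.val + 1 = j.val) :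
    s(inr i, inr j) ∈ (Fan n).edgeSet :=
  (mem_fan_edgeSet _).mpr (Or.inr ⟨i, j, hij, rfl⟩)

lemma fanCol_proper {n : ℕ} [NeZero n] (hn : 4 ≤ n) :
    ∀ e ∈ (Fan n).edgeSet, ∀ f ∈ (Fan n).edgeSet, e ≠ f → (∃ x, x ∈ e ∧ x ∈ f) →
      fanCol n e ≠ fanCol n f := by
  intro e he f hf hne hsh hcol
  rw [mem_fan_edgeSet] at he hf
  rcases he with ⟨a, rfl⟩|⟨a, b, hab, rfl⟩ <;> rcases hf with ⟨a', rfl⟩|⟨a', b', hab', rfl⟩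
  · rw [fanCol_hub, fanCol_hub] at hcol
    exact hne (by rw [hcol])
  · -- hub vs path
    have hval : a.val = (a'.val + 2) % n := by rw [← fanCol_path a' b' hab', ← hcol, fanCol_hub]
    obtain ⟨x, hx1, hx2⟩ := hsh
    rw [Sym2.mem_iff] at hx1 hx2
    have hb' : b'.val < n := b'.isLt
    rcases hx1 with rfl|rfl
    · rcases hx2 with h3|h3 <;> exact absurd h3 (by simp)
    · have hv : a.val = a'.val ∨ a.val = b'.val := by
        rcases hx2 with h3|h3
        · exact Or.inl (congrArg Fin.val (Sum.inr.inj h3))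
        · exact Or.inr (congrArg Fin.val (Sum.inr.inj h3))
      rcases mod_lin (show 0 < n by omega) (show a'.val + 2 < 2 * n by omega) with ⟨h1, h2⟩|⟨h1, h2⟩ <;>
        rcases hv with hv|hv <;> omega
  · -- path vs hub
    have hval : a'.val = (a.val + 2) % n := by rw [← fanCol_path a b hab, hcol, fanCol_hub]
    obtain ⟨x, hx1, hx2⟩ := hsh
    rw [Sym2.mem_iff] at hx1 hx2
    have hb : b.val < n := b.isLt
    rcases hx2 with rfl|rfl
    · rcases hx1 with h3|h3 <;> exact absurd h3 (by simp)
    · have hv : a'.val = a.val ∨ a'.val = b.val := by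
        rcases hx1 with h3|h3
        · exact Or.inl (congrArg Fin.val (Sum.inr.inj h3))
        · exact Or.inr (congrArg Fin.val (Sum.inr.inj h3))
      rcases mod_lin (show 0 < n by omega) (show a.val + 2 < 2 * n by omega) with ⟨h1, h2⟩|⟨h1, h2⟩ <;>
        rcases hv with hv|hv <;> omega
  · -- path vs path
    have hval : (a.val + 2) % n = (a'.val + 2) % n := by
      rw [← fanCol_path a b hab, ← fanCol_path a' b' hab', hcol]
    have hb : b.val < n := b.isLt
    have hb' : b'.val < n := b'.isLt
    have haa' : a.val = a'.val := by
      rcases mod_lin (show 0 < n by omega) (show a.val + 2 < 2 * n by omega) with ⟨h1, h2⟩|⟨h1, h2⟩ <;>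
        rcases mod_lin (show 0 < n by omega) (show a'.val + 2 < 2 * n by omega) with ⟨h3, h4⟩|⟨h3, h4⟩ <;>
        omega
    have : a = a' := Fin.ext haa'
    subst this
    have : b = b' := Fin.ext (by omega)
    subst this
    exact hne rfl

lemma loc_hub {n : ℕ} [NeZero n] (hn : 4 ≤ n) (i : Fin n) :
    ∃ t, classDist (Fan n) (fanCol n) (inl 0) t ≠ classDist (Fan n) (fanCol n) (inr i) t := by
  have hi : i.val < n := i.isLt
  refine ⟨⟨(i.val + 3) % n, Nat.mod_lt _ (by omega)⟩, classDist_ne fan_reachable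
    (fan_hub_edge_mem _) (fanCol_hub _) (Sym2.mem_mk_left _ _) (fan_NI _ _ (by simp) ?_ ?_)⟩
  · simp only [ne_eq, inr.injEq, Fin.ext_iff]
    rcases mod_lin (show 0 < n by omega) (show i.val + 3 < 2 * n by omega) with ⟨h1, h2⟩|⟨h1, h2⟩ <;>
      omega
  · intro a b hab hmod
    have hb : b.val < n := b.isLt
    simp only [ne_eq, inr.injEq, Fin.ext_iff] at *
    constructor <;>
    · rcases mod_lin (show 0 < n by omega) (show i.val + 3 < 2 * n by omega) with ⟨h1, h2⟩|⟨h1, h2⟩ <;>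
      rcases mod_lin (show 0 < n by omega) (show a.val + 2 < 2 * n by omega) with ⟨h3, h4⟩|⟨h3, h4⟩ <;>
      omega

lemma loc_path {n : ℕ} [NeZero n] (hn : 4 ≤ n) {i j : Fin n} (hij : i.val < j.val) :
    ∃ t, classDist (Fan n) (fanCol n) (inr i) t ≠ classDist (Fan n) (fanCol n) (inr j) t := by
  have hi : i.val < n := i.isLt
  have hj : j.val < n := j.isLt
  rcases Nat.lt_or_ge j.val (i.val + 3) with hcase|hcase
  · rcases Nat.lt_or_ge j.val (i.val + 2) with hcase2|hcase2
    · -- j = i + 1 : color t = i, zero at p i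
      refine ⟨i, classDist_ne fan_reachable (fan_hub_edge_mem i) (fanCol_hub i)
        (Sym2.mem_mk_right _ _) (fan_NI _ _ (by simp) ?_ ?_)⟩
      · simp only [ne_eq, inr.injEq, Fin.ext_iff]; omega
      · intro a b hab hmod
        have hb : b.val < n := b.isLt
        simp only [ne_eq, inr.injEq, Fin.ext_iff]
        constructor <;>
        · rcases mod_lin (show 0 < n by omega) (show a.val + 2 < 2 * n by omega) with ⟨h3, h4⟩|⟨h3, h4⟩ <;>
          omega
    · -- j = i + 2
      rcases Nat.eq_zero_or_pos i.val with hzero|hpos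
      · -- i = 0, j = 2 : t = 3, zero at p j via edge (1,2)
        refine ⟨⟨3, by omega⟩, (classDist_ne fan_reachable
          (fan_path_edge_mem ⟨1, by omega⟩ j (by simp only [Fin.val_mk]; omega)) (Fin.ext ?_)
          (Sym2.mem_mk_right _ _) (fan_NI _ _ (by simp) ?_ ?_)).symm⟩
        · rw [fanCol_path _ _ (by simp only [Fin.val_mk]; omega)]
          simp only [Fin.val_mk]
          rw [Nat.mod_eq_of_lt (by omega)]
        · simp only [ne_eq, inr.injEq, Fin.ext_iff, Fin.val_mk]
          omega
        · intro a b hab hmod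
          have hb : b.val < n := b.isLt
          simp only [Fin.val_mk] at hmod
          simp only [ne_eq, inr.injEq, Fin.ext_iff]
          constructor <;>
          · rcases mod_lin (show 0 < n by omega) (show a.val + 2 < 2 * n by omega) with ⟨h3, h4⟩|⟨h3, h4⟩ <;>
            omega
      · -- i ≥ 1 : t = i+1, zero at p i via edge (i-1, i)
        refine ⟨⟨i.val + 1, by omega⟩, classDist_ne fan_reachable
          (fan_path_edge_mem ⟨i.val - 1, by omega⟩ i (by simp only [Fin.val_mk]; omega)) (Fin.ext ?_)
          (Sym2.mem_mk_right _ _) (fan_NI _ _ (by simp) ?_ ?_)⟩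
        · rw [fanCol_path _ _ (by simp only [Fin.val_mk]; omega)]
          simp only [Fin.val_mk]
          rw [Nat.mod_eq_of_lt (by omega)]
          omega
        · simp only [ne_eq, inr.injEq, Fin.ext_iff, Fin.val_mk]
          omega
        · intro a b hab hmod
          have hb : b.val < n := b.isLt
          simp only [Fin.val_mk] at hmod
          simp only [ne_eq, inr.injEq, Fin.ext_iff]
          constructor <;>
          · rcases mod_lin (show 0 < n by omega) (show a.val + 2 < 2 * n by omega) with ⟨h3, h4⟩|⟨h3, h4⟩ <;>
            omega
  · -- j ≥ i + 3 : t = j, zero at p j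
    refine ⟨j, (classDist_ne fan_reachable (fan_hub_edge_mem j) (fanCol_hub j)
      (Sym2.mem_mk_right _ _) (fan_NI _ _ (by simp) ?_ ?_)).symm⟩
    · simp only [ne_eq, inr.injEq, Fin.ext_iff]; omega
    · intro a b hab hmod
      have hb : b.val < n := b.isLt
      simp only [ne_eq, inr.injEq, Fin.ext_iff]
      constructor <;>
      · rcases mod_lin (show 0 < n by omega) (show a.val + 2 < 2 * n by omega) with ⟨h3, h4⟩|⟨h3, h4⟩ <;>
        omega

lemma fanCol_locating {n : ℕ} [NeZero n] (hn : 4 ≤ n) :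
    IsEdgeLocatingColoring (Fan n) (fanCol n) := by
  refine ⟨fanCol_proper hn, ?_⟩
  rintro (a|i) (b|j) hne
  · exact absurd (by rw [Subsingleton.elim a b]) hne
  · rw [Fin.fin_one_eq_zero a]; exact loc_hub hn j
  · rw [Fin.fin_one_eq_zero b]; exact (loc_hub hn i).imp fun t ht => ht.symm
  · have : i.val ≠ j.val := fun h => hne (congrArg inr (Fin.ext h))
    rcases Nat.lt_or_ge i.val j.val with h|h
    · exact loc_path hn h
    · exact (loc_path hn (show j.val < i.val by omega)).imp fun t ht => ht.symm

lemma fan_hub_edges_ne {n : ℕ} {a b : Fin n} (h : a ≠ b) :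
    s(inl 0, inr a) ≠ s((inl 0 : Fin 1 ⊕ Fin n), inr b) := by
  intro he
  rcases Sym2.eq_iff.mp he with ⟨-, h2⟩|⟨h1, -⟩
  · exact h (Sum.inr.inj h2)
  · simp at h1

lemma fan_lower {n k : ℕ} (c : Sym2 (Fin 1 ⊕ Fin n) → Fin k)
    (hc : IsEdgeLocatingColoring (Fan n) c) : n ≤ k := by
  have inj : Function.Injective fun j : Fin n => c s(inl 0, inr j) := by
    intro a b hab
    by_contra hne
    exact hc.1 _ (fan_hub_edge_mem a) _ (fan_hub_edge_mem b) (fan_hub_edges_ne hne)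
      ⟨inl 0, Sym2.mem_mk_left _ _, Sym2.mem_mk_left _ _⟩ hab
  simpa using Fintype.card_le_of_injective _ inj

lemma fan_chrom_eq {n : ℕ} (hn : 4 ≤ n) : edgeLocatingChromaticNumber (Fan n) = n := by
  haveI : NeZero n := ⟨by omega⟩
  have hmem : n ∈ {k | ∃ c : Sym2 (Fin 1 ⊕ Fin n) → Fin k, IsEdgeLocatingColoring (Fan n) c} :=
    ⟨fanCol n, fanCol_locating hn⟩
  refine le_antisymm (Nat.sInf_le hmem) (le_csInf ⟨n, hmem⟩ ?_)
  rintro k ⟨c, hc⟩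
  exact fan_lower c hc

def col2fun : (Fin 1 ⊕ Fin 2) → (Fin 1 ⊕ Fin 2) → Fin 3
  | inl _, inr j => ⟨j.val, by omega⟩
  | inr j, inl _ => ⟨j.val, by omega⟩
  | inr _, inr _ => 2
  | inl _, inl _ => 0

def col2 : Sym2 (Fin 1 ⊕ Fin 2) → Fin 3 :=
  Sym2.lift ⟨col2fun, by rintro (a|i) (b|j) <;> rfl⟩

lemma col2_hub (j : Fin 2) : col2 s(inl 0, inr j) = ⟨j.val, by omega⟩ := rfl
lemma col2_path (i j : Fin 2) : col2 s(inr i, inr j) = 2 := rfl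

lemma path2_eq {i j : Fin 2} (hij : i.val + 1 = j.val) : i = 0 ∧ j = 1 := by
  have hi := i.isLt; have hj := j.isLt
  constructor <;> apply Fin.ext <;> omega

lemma col2_NI (v : Fin 1 ⊕ Fin 2) (t : Fin 3)
    (h1 : ∀ j : Fin 2, j.val = t.val → v ≠ inl 0 ∧ v ≠ inr j)
    (h2 : t.val = 2 → v ≠ inr 0 ∧ v ≠ inr 1) :
    ∀ e ∈ (Fan 2).edgeSet, col2 e = t → v ∉ e := by
  intro e he hc
  rw [mem_fan_edgeSet] at he
  rcases he with ⟨j, rfl⟩|⟨i, j, hij, rfl⟩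
  · rw [col2_hub] at hc
    obtain ⟨hv1, hv2⟩ := h1 j (by rw [← hc])
    rw [Sym2.mem_iff]; push_neg; exact ⟨hv1, hv2⟩
  · obtain ⟨rfl, rfl⟩ := path2_eq hij
    rw [col2_path] at hc
    obtain ⟨hv1, hv2⟩ := h2 (by rw [← hc]; rfl)
    rw [Sym2.mem_iff]; push_neg; exact ⟨hv1, hv2⟩

lemma col2_locating : IsEdgeLocatingColoring (Fan 2) col2 := by
  constructor
  · intro e he f hf hne _ hcol
    rw [mem_fan_edgeSet] at he hf
    rcases he with ⟨a, rfl⟩|⟨a, b, hab, rfl⟩ <;> rcases hf with ⟨a', rfl⟩|⟨a', b', hab', rfl⟩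
    · rw [col2_hub, col2_hub] at hcol
      have : a = a' := Fin.ext (by simpa [Fin.ext_iff] using hcol)
      exact hne (by rw [this])
    · rw [col2_hub, col2_path] at hcol
      have := a.isLt
      simp [Fin.ext_iff] at hcol
      omega
    · rw [col2_path, col2_hub] at hcol
      have := a'.isLt
      simp [Fin.ext_iff] at hcol
      omega
    · obtain ⟨rfl, rfl⟩ := path2_eq hab
      obtain ⟨rfl, rfl⟩ := path2_eq hab'
      exact hne rfl
  · have hr : ∀ u v : Fin 1 ⊕ Fin 2, (Fan 2).Reachable u v := fan_reachable
    rintro (a|i) (b|j) hne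
    · exact absurd (by rw [Subsingleton.elim a b]) hne
    · rw [Fin.fin_one_eq_zero a]
      refine ⟨⟨(1 - j.val : ℕ), by omega⟩, classDist_ne hr (fan_hub_edge_mem ⟨1 - j.val, by omega⟩)
        (col2_hub _) (Sym2.mem_mk_left _ _) (col2_NI _ _ ?_ ?_)⟩
      · intro j' hj'
        have := j.isLt; have := j'.isLt
        refine ⟨by simp, ?_⟩
        simp only [ne_eq, inr.injEq, Fin.ext_iff, Fin.val_mk] at *
        omega
      · have := j.isLt
        simp only [Fin.val_mk]
        omega
    · rw [Fin.fin_one_eq_zero b]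
      refine ⟨⟨(1 - i.val : ℕ), by omega⟩, (classDist_ne hr (fan_hub_edge_mem ⟨1 - i.val, by omega⟩)
        (col2_hub _) (Sym2.mem_mk_left _ _) (col2_NI _ _ ?_ ?_)).symm⟩
      · intro j' hj'
        have := i.isLt; have := j'.isLt
        refine ⟨by simp, ?_⟩
        simp only [ne_eq, inr.injEq, Fin.ext_iff, Fin.val_mk] at *
        omega
      · have := i.isLt
        simp only [Fin.val_mk]
        omega
    · -- both path vertices : use color of hub edge at i
      have hne' : i.val ≠ j.val := fun h => hne (congrArg inr (Fin.ext h))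
      have := i.isLt; have := j.isLt
      refine ⟨⟨i.val, by omega⟩, classDist_ne hr (fan_hub_edge_mem i)
        (col2_hub i) (Sym2.mem_mk_right _ _) (col2_NI _ _ ?_ ?_)⟩
      · intro j' hj'
        have := j'.isLt
        refine ⟨by simp, ?_⟩
        simp only [ne_eq, inr.injEq, Fin.ext_iff, Fin.val_mk] at *
        omega
      · simp only [Fin.val_mk]
        omega

lemma fan2_lower {k : ℕ} (c : Sym2 (Fin 1 ⊕ Fin 2) → Fin k)
    (hc : IsEdgeLocatingColoring (Fan 2) c) : 3 ≤ k := by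
  set E0 : Sym2 (Fin 1 ⊕ Fin 2) := s(inl 0, inr 0)
  set E1 : Sym2 (Fin 1 ⊕ Fin 2) := s(inl 0, inr 1)
  set E2 : Sym2 (Fin 1 ⊕ Fin 2) := s(inr 0, inr 1)
  have m0 : E0 ∈ (Fan 2).edgeSet := fan_hub_edge_mem 0
  have m1 : E1 ∈ (Fan 2).edgeSet := fan_hub_edge_mem 1
  have m2 : E2 ∈ (Fan 2).edgeSet := fan_path_edge_mem 0 1 rfl
  have inj : Function.Injective ![c E0, c E1, c E2] := by
    intro a b hab
    fin_cases a <;> fin_cases b <;> simp_all <;> exfalso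
    · exact hc.1 _ m0 _ m1 (by decide) ⟨inl 0, by decide, by decide⟩ hab
    · exact hc.1 _ m0 _ m2 (by decide) ⟨inr 0, by decide, by decide⟩ hab
    · exact hc.1 _ m1 _ m0 (by decide) ⟨inl 0, by decide, by decide⟩ hab
    · exact hc.1 _ m1 _ m2 (by decide) ⟨inr 1, by decide, by decide⟩ hab
    · exact hc.1 _ m2 _ m0 (by decide) ⟨inr 0, by decide, by decide⟩ hab
    · exact hc.1 _ m2 _ m1 (by decide) ⟨inr 1, by decide, by decide⟩ hab
  simpa using Fintype.card_le_of_injective _ inj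

lemma fan2_chrom_eq : edgeLocatingChromaticNumber (Fan 2) = 3 := by
  have hmem : 3 ∈ {k | ∃ c : Sym2 (Fin 1 ⊕ Fin 2) → Fin k, IsEdgeLocatingColoring (Fan 2) c} :=
    ⟨col2, col2_locating⟩
  refine le_antisymm (Nat.sInf_le hmem) (le_csInf ⟨3, hmem⟩ ?_)
  rintro k ⟨c, hc⟩
  exact fan2_lower c hc

def col3fun : (Fin 1 ⊕ Fin 3) → (Fin 1 ⊕ Fin 3) → Fin 4
  | inl _, inr j => ⟨j.val, by omega⟩
  | inr j, inl _ => ⟨j.val, by omega⟩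
  | inr i, inr j => if min i.val j.val = 0 then 3 else 0
  | inl _, inl _ => 0

def col3 : Sym2 (Fin 1 ⊕ Fin 3) → Fin 4 :=
  Sym2.lift ⟨col3fun, by rintro (a|i) (b|j) <;> simp [col3fun, Nat.min_comm]⟩

lemma col3_hub (j : Fin 3) : col3 s(inl 0, inr j) = ⟨j.val, by omega⟩ := rfl

lemma path3_eq {i j : Fin 3} (hij : i.val + 1 = j.val) : (i = 0 ∧ j = 1) ∨ (i = 1 ∧ j = 2) := by
  have hi := i.isLt; have hj := j.isLt
  rcases Nat.lt_or_ge i.val 1 with h|h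
  · exact Or.inl ⟨Fin.ext (by omega), Fin.ext (by omega)⟩
  · exact Or.inr ⟨Fin.ext (by omega), Fin.ext (by omega)⟩

lemma col3_NI (v : Fin 1 ⊕ Fin 3) (t : Fin 4)
    (h1 : ∀ j : Fin 3, j.val = t.val → v ≠ inl 0 ∧ v ≠ inr j)
    (h2 : t.val = 3 → v ≠ inr 0 ∧ v ≠ inr 1)
    (h3 : t.val = 0 → v ≠ inr 1 ∧ v ≠ inr 2) :
    ∀ e ∈ (Fan 3).edgeSet, col3 e = t → v ∉ e := by
  intro e he hc
  rw [mem_fan_edgeSet] at he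
  rcases he with ⟨j, rfl⟩|⟨i, j, hij, rfl⟩
  · rw [col3_hub] at hc
    obtain ⟨hv1, hv2⟩ := h1 j (by rw [← hc])
    rw [Sym2.mem_iff]; push_neg; exact ⟨hv1, hv2⟩
  · rcases path3_eq hij with ⟨rfl, rfl⟩|⟨rfl, rfl⟩
    · have : col3 s((inr 0 : Fin 1 ⊕ Fin 3), inr 1) = 3 := rfl
      rw [this] at hc
      obtain ⟨hv1, hv2⟩ := h2 (by rw [← hc]; rfl)
      rw [Sym2.mem_iff]; push_neg; exact ⟨hv1, hv2⟩
    · have : col3 s((inr 1 : Fin 1 ⊕ Fin 3), inr 2) = 0 := rfl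
      rw [this] at hc
      obtain ⟨hv1, hv2⟩ := h3 (by rw [← hc]; rfl)
      rw [Sym2.mem_iff]; push_neg; exact ⟨hv1, hv2⟩

lemma col3_locating : IsEdgeLocatingColoring (Fan 3) col3 := by
  constructor
  · intro e he f hf hne hsh hcol
    rw [mem_fan_edgeSet] at he hf
    rcases he with ⟨a, rfl⟩|⟨a, b, hab, rfl⟩ <;> rcases hf with ⟨a', rfl⟩|⟨a', b', hab', rfl⟩
    · rw [col3_hub, col3_hub] at hcol
      have : a = a' := Fin.ext (by simpa [Fin.ext_iff] using hcol)
      exact hne (by rw [this])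
    · rcases path3_eq hab' with ⟨rfl, rfl⟩|⟨rfl, rfl⟩
      · rw [col3_hub, show col3 s((inr 0 : Fin 1 ⊕ Fin 3), inr 1) = 3 from rfl] at hcol
        have := a.isLt
        simp only [Fin.ext_iff, Fin.val_mk] at hcol
        omega
      · rw [col3_hub, show col3 s((inr 1 : Fin 1 ⊕ Fin 3), inr 2) = 0 from rfl] at hcol
        have ha : a = 0 := Fin.ext (by have h := congrArg Fin.val hcol; exact h)
        subst ha
        obtain ⟨x, hx1, hx2⟩ := hsh
        rw [Sym2.mem_iff] at hx1 hx2
        rcases hx1 with rfl|rfl <;> rcases hx2 with h|h <;> exact absurd h (by decide)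
    · rcases path3_eq hab with ⟨rfl, rfl⟩|⟨rfl, rfl⟩
      · rw [col3_hub, show col3 s((inr 0 : Fin 1 ⊕ Fin 3), inr 1) = 3 from rfl] at hcol
        have := a'.isLt
        simp only [Fin.ext_iff, Fin.val_mk] at hcol
        omega
      · rw [col3_hub, show col3 s((inr 1 : Fin 1 ⊕ Fin 3), inr 2) = 0 from rfl] at hcol
        have ha : a' = 0 := Fin.ext (by have h := congrArg Fin.val hcol; exact h.symm)
        subst ha
        obtain ⟨x, hx1, hx2⟩ := hsh
        rw [Sym2.mem_iff] at hx1 hx2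
        rcases hx2 with rfl|rfl <;> rcases hx1 with h|h <;> exact absurd h (by decide)
    · rcases path3_eq hab with ⟨rfl, rfl⟩|⟨rfl, rfl⟩ <;>
        rcases path3_eq hab' with ⟨rfl, rfl⟩|⟨rfl, rfl⟩
      · exact hne rfl
      · exact absurd hcol (by decide)
      · exact absurd hcol (by decide)
      · exact hne rfl
  · have hr : ∀ u v : Fin 1 ⊕ Fin 3, (Fan 3).Reachable u v := fan_reachable
    rintro (a|i) (b|j) hne
    · exact absurd (by rw [Subsingleton.elim a b]) hne
    · rw [Fin.fin_one_eq_zero a]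
      fin_cases j
      · exact ⟨1, classDist_ne hr (fan_hub_edge_mem 1) rfl (Sym2.mem_mk_left _ _)
          (col3_NI _ _ (by decide) (by decide) (by decide))⟩
      · exact ⟨2, classDist_ne hr (fan_hub_edge_mem 2) rfl (Sym2.mem_mk_left _ _)
          (col3_NI _ _ (by decide) (by decide) (by decide))⟩
      · exact ⟨1, classDist_ne hr (fan_hub_edge_mem 1) rfl (Sym2.mem_mk_left _ _)
          (col3_NI _ _ (by decide) (by decide) (by decide))⟩
    · rw [Fin.fin_one_eq_zero b]
      fin_cases i
      · exact ⟨1, (classDist_ne hr (fan_hub_edge_mem 1) rfl (Sym2.mem_mk_left _ _)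
          (col3_NI _ _ (by decide) (by decide) (by decide))).symm⟩
      · exact ⟨2, (classDist_ne hr (fan_hub_edge_mem 2) rfl (Sym2.mem_mk_left _ _)
          (col3_NI _ _ (by decide) (by decide) (by decide))).symm⟩
      · exact ⟨1, (classDist_ne hr (fan_hub_edge_mem 1) rfl (Sym2.mem_mk_left _ _)
          (col3_NI _ _ (by decide) (by decide) (by decide))).symm⟩
    · fin_cases i <;> fin_cases j
      · exact absurd rfl hne
      · exact ⟨1, (classDist_ne hr (fan_hub_edge_mem 1) rfl (Sym2.mem_mk_right _ _)
          (col3_NI _ _ (by decide) (by decide) (by decide))).symm⟩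
      · exact ⟨2, (classDist_ne hr (fan_hub_edge_mem 2) rfl (Sym2.mem_mk_right _ _)
          (col3_NI _ _ (by decide) (by decide) (by decide))).symm⟩
      · exact ⟨1, classDist_ne hr (fan_hub_edge_mem 1) rfl (Sym2.mem_mk_right _ _)
          (col3_NI _ _ (by decide) (by decide) (by decide))⟩
      · exact absurd rfl hne
      · exact ⟨1, classDist_ne hr (fan_hub_edge_mem 1) rfl (Sym2.mem_mk_right _ _)
          (col3_NI _ _ (by decide) (by decide) (by decide))⟩
      · exact ⟨2, classDist_ne hr (fan_hub_edge_mem 2) rfl (Sym2.mem_mk_right _ _)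
          (col3_NI _ _ (by decide) (by decide) (by decide))⟩
      · exact ⟨1, (classDist_ne hr (fan_hub_edge_mem 1) rfl (Sym2.mem_mk_right _ _)
          (col3_NI _ _ (by decide) (by decide) (by decide))).symm⟩
      · exact absurd rfl hne

lemma fan3_edges {e : Sym2 (Fin 1 ⊕ Fin 3)} (he : e ∈ (Fan 3).edgeSet) :
    e = s(inl 0, inr 0) ∨ e = s(inl 0, inr 1) ∨ e = s(inl 0, inr 2) ∨
    e = s(inr 0, inr 1) ∨ e = s(inr 1, inr 2) := by
  rw [mem_fan_edgeSet] at he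
  rcases he with ⟨j, rfl⟩|⟨i, j, hij, rfl⟩
  · fin_cases j <;> tauto
  · rcases path3_eq hij with ⟨rfl, rfl⟩|⟨rfl, rfl⟩ <;> tauto

lemma fan3_lower {k : ℕ} (c : Sym2 (Fin 1 ⊕ Fin 3) → Fin k)
    (hc : IsEdgeLocatingColoring (Fan 3) c) : 4 ≤ k := by
  by_contra hk
  push_neg at hk
  set H0 : Sym2 (Fin 1 ⊕ Fin 3) := s(inl 0, inr 0) with hH0
  set H1 : Sym2 (Fin 1 ⊕ Fin 3) := s(inl 0, inr 1) with hH1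
  set H2 : Sym2 (Fin 1 ⊕ Fin 3) := s(inl 0, inr 2) with hH2
  set E01 : Sym2 (Fin 1 ⊕ Fin 3) := s(inr 0, inr 1) with hE01'
  set E12 : Sym2 (Fin 1 ⊕ Fin 3) := s(inr 1, inr 2) with hE12'
  have m0 : H0 ∈ (Fan 3).edgeSet := fan_hub_edge_mem 0
  have m1 : H1 ∈ (Fan 3).edgeSet := fan_hub_edge_mem 1
  have m2 : H2 ∈ (Fan 3).edgeSet := fan_hub_edge_mem 2
  have m01 : E01 ∈ (Fan 3).edgeSet := fan_path_edge_mem 0 1 rfl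
  have m12 : E12 ∈ (Fan 3).edgeSet := fan_path_edge_mem 1 2 rfl
  have h01 : c H0 ≠ c H1 := hc.1 _ m0 _ m1 (by decide) ⟨inl 0, by decide, by decide⟩
  have h02 : c H0 ≠ c H2 := hc.1 _ m0 _ m2 (by decide) ⟨inl 0, by decide, by decide⟩
  have h12 : c H1 ≠ c H2 := hc.1 _ m1 _ m2 (by decide) ⟨inl 0, by decide, by decide⟩
  -- first, k = 3
  have h3k : 3 ≤ k := by
    have inj : Function.Injective ![c H0, c H1, c H2] := by
      intro a b hab
      fin_cases a <;> fin_cases b <;> simp_all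
    simpa using Fintype.card_le_of_injective _ inj
  have hk3 : k = 3 := by omega
  subst hk3
  -- the path edge colors are forced
  have hvals : (c H0).val ≠ (c H1).val := fun h => h01 (Fin.ext h)
  have hvals2 : (c H0).val ≠ (c H2).val := fun h => h02 (Fin.ext h)
  have hvals3 : (c H1).val ≠ (c H2).val := fun h => h12 (Fin.ext h)
  have hcE01 : c E01 = c H2 := by
    have n0 : c E01 ≠ c H0 := hc.1 _ m01 _ m0 (by decide) ⟨inr 0, by decide, by decide⟩
    have n1 : c E01 ≠ c H1 := hc.1 _ m01 _ m1 (by decide) ⟨inr 1, by decide, by decide⟩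
    have v0 : (c E01).val ≠ (c H0).val := fun h => n0 (Fin.ext h)
    have v1 : (c E01).val ≠ (c H1).val := fun h => n1 (Fin.ext h)
    have := (c E01).isLt; have := (c H0).isLt; have := (c H1).isLt; have := (c H2).isLt
    exact Fin.ext (by omega)
  have hcE12 : c E12 = c H0 := by
    have n1 : c E12 ≠ c H1 := hc.1 _ m12 _ m1 (by decide) ⟨inr 1, by decide, by decide⟩
    have n2 : c E12 ≠ c H2 := hc.1 _ m12 _ m2 (by decide) ⟨inr 2, by decide, by decide⟩
    have v1 : (c E12).val ≠ (c H1).val := fun h => n1 (Fin.ext h)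
    have v2 : (c E12).val ≠ (c H2).val := fun h => n2 (Fin.ext h)
    have := (c E12).isLt; have := (c H0).isLt; have := (c H1).isLt; have := (c H2).isLt
    exact Fin.ext (by omega)
  -- p0 and p2 have equal codes: contradiction
  obtain ⟨t, ht⟩ := hc.2 (inr 0) (inr 2) (by decide)
  have htcases : t = c H0 ∨ t = c H1 ∨ t = c H2 := by
    have := t.isLt; have := (c H0).isLt; have := (c H1).isLt; have := (c H2).isLt
    by_cases e0 : t.val = (c H0).val
    · exact Or.inl (Fin.ext e0)
    · by_cases e1 : t.val = (c H1).val
      · exact Or.inr (Or.inl (Fin.ext e1))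
      · exact Or.inr (Or.inr (Fin.ext (by omega)))
  have hr : ∀ u v : Fin 1 ⊕ Fin 3, (Fan 3).Reachable u v := fan_reachable
  -- compute classDist at t = c H1 : both are 1
  have hadj01 : (Fan 3).Adj (inr 0) (inl 0) := (fan_adj_hub 0 0).symm
  have hadj21 : (Fan 3).Adj (inr 2) (inl 0) := (fan_adj_hub 0 2).symm
  have hadjp01 : (Fan 3).Adj (inr 0) (inr 1) := by
    rw [fan_adj_iff]; exact Or.inr (Or.inr ⟨0, 1, rfl, rfl, Or.inl rfl⟩)
  have hadjp21 : (Fan 3).Adj (inr 2) (inr 1) := by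
    rw [fan_adj_iff]; exact Or.inr (Or.inr ⟨2, 1, rfl, rfl, Or.inr rfl⟩)
  have hcd1 : ∀ v : Fin 1 ⊕ Fin 3, v ∉ H1 → (Fan 3).Adj v (inl 0) → (Fan 3).Adj v (inr 1) →
      classDist (Fan 3) c v (c H1) = 1 := by
    intro v hv hva hvb
    refine le_antisymm ?_ ?_
    · refine le_trans (iInf₂_le H1 ⟨m1, rfl⟩) ?_
      rw [hH1, edgeDist_mk, dist_eq_one_iff_adj.mpr hva, dist_eq_one_iff_adj.mpr hvb]
      simp
    · refine le_iInf₂ fun e he => ?_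
      obtain ⟨he1, he2⟩ := he
      have : e = H1 := by
        rcases fan3_edges he1 with rfl|rfl|rfl|rfl|rfl
        · exact absurd he2 h01
        · rfl
        · exact absurd he2 (fun h => h12 h.symm)
        · exact absurd he2 (fun h => h12 (hcE01 ▸ h).symm)
        · exact absurd he2 (fun h => h01 (hcE12.symm.trans h))
      subst this
      exact_mod_cast Nat.one_le_cast.mpr (one_le_edgeDist hr hv)
  rcases htcases with rfl|rfl|rfl
  · exact ht (by rw [classDist_eq_zero m0 rfl (by decide), classDist_eq_zero m12 hcE12 (by decide)])
  · exact ht (by rw [hcd1 _ (by decide) hadj01 hadjp01, hcd1 _ (by decide) hadj21 hadjp21])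
  · exact ht (by rw [classDist_eq_zero m01 hcE01 (by decide), classDist_eq_zero m2 rfl (by decide)])

lemma fan3_chrom_eq : edgeLocatingChromaticNumber (Fan 3) = 4 := by
  have hmem : 4 ∈ {k | ∃ c : Sym2 (Fin 1 ⊕ Fin 3) → Fin k, IsEdgeLocatingColoring (Fan 3) c} :=
    ⟨col3, col3_locating⟩
  refine le_antisymm (Nat.sInf_le hmem) (le_csInf ⟨4, hmem⟩ ?_)
  rintro k ⟨c, hc⟩
  exact fan3_lower c hc

/-- For every integer `n ≥ 4`, the edge-locating chromatic number of the fan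
`F_n = K_1 + P_n` equals `n`; moreover `χ'_L(F_2) = 3` and `χ'_L(F_3) = 4`. -/
theorem stmt_17 :
    (∀ n : ℕ, 4 ≤ n →
      edgeLocatingChromaticNumber
        (graphJoin (⊤ : SimpleGraph (Fin 1)) (SimpleGraph.pathGraph n)) = n) ∧
    edgeLocatingChromaticNumber
      (graphJoin (⊤ : SimpleGraph (Fin 1)) (SimpleGraph.pathGraph 2)) = 3 ∧
    edgeLocatingChromaticNumber
      (graphJoin (⊤ : SimpleGraph (Fin 1)) (SimpleGraph.pathGraph 3)) = 4 :=
  ⟨fun _ hn => fan_chrom_eq hn, fan2_chrom_eq, fan3_chrom_eq⟩
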